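/- arXiv:2507.05867 — 4 statements merged into one kernel-verified Lean document; each statement's English description precedes it below -/
import Mathlib

section
/- Let f : ℝ × ℝⁿ → ℝⁿ be continuous and T-periodic in its first argument (f(t + T, x) = f(t, x) for all t, x), with T > 0. Assume: (i) for every t₀ ∈ ℝ and x₀ ∈ ℝⁿ there exists a continuously differentiable global solution x : ℝ → ℝⁿ of ẋ(t) = f(t, x(t)) with x(t₀) = x₀; and (ii) there exist C ≥ 1 and ε > 0 such that any two global solutions x, x̃ satisfy ‖x(t) − x̃(t)‖ ≤ C e^{−ε(t − s)} ‖x(s) − x̃(s)‖ whenever t ≥ s. Then there exists a unique global solution x* that is T-periodic (x*(t + T) = x*(t) for all t ∈ ℝ), and every global solution x satisfies ‖x(t) − x*(t)‖ ≤ C e^{−ε t} ‖x(0) − x*(0)‖ for all t ≥ 0; in particular every solution converges to x* exponentially. -/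
/-!
The time-`T` map `P a = x_a(T)`, where `x_a` is the solution with `x_a(0) = a`, satisfies
`P^[k] a = x_a(kT)` because `f` is `T`-periodic, so incremental stability makes `P^[k]` a
contraction once `C e^{-εkT} < 1`. Its fixed point `a` gives a solution with `x_a(T) = x_a(0)`,
which by forward uniqueness is `T`-periodic on `[0, ∞)` and extends periodically to all of `ℝ`.
Two periodic solutions are at distance at most `C e^{-εkT}` times their own distance, hence equal.
-/

open Set Filter Topology Function

variable {E : Type*} [NormedAddCommGroup E] [NormedSpace ℝ E]

def IsGlobalSolution (f : ℝ → E → E) (x : ℝ → E) : Prop :=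
  ∀ t, HasDerivAt x (f t (x t)) t

def IsIncrementallyStable (f : ℝ → E → E) (C ε : ℝ) : Prop :=
  ∀ x y, IsGlobalSolution f x → IsGlobalSolution f y → ∀ s t : ℝ, s ≤ t →
    ‖x t - y t‖ ≤ C * Real.exp (-ε * (t - s)) * ‖x s - y s‖

theorem IsGlobalSolution.comp_add_const {f : ℝ → E → E} {x : ℝ → E} {c : ℝ}
    (hx : IsGlobalSolution f x) (hf : ∀ y, Periodic (f · y) c) :
    IsGlobalSolution f (fun t => x (t + c)) := fun t => by
  convert (hx (t + c)).comp_add_const t c using 1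
  exact (hf _ t).symm

theorem apply_add_nsmul_of_forall_nonneg {α : Type*} {g : ℝ → α} {T : ℝ} (hT : 0 ≤ T)
    (hg : ∀ s, 0 ≤ s → g (s + T) = g s) {s : ℝ} (hs : 0 ≤ s) (k : ℕ) : g (s + k • T) = g s := by
  induction k with
  | zero => simp
  | succ k ih => rw [succ_nsmul, ← add_assoc, hg _ (add_nonneg hs (nsmul_nonneg hT k)), ih]

section PeriodicExtension

variable {α : Type*} {T : ℝ} (hT : 0 < T)

noncomputable def periodicExtension (g : ℝ → α) : ℝ → α :=
  fun t => g (toIcoMod hT 0 t)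

theorem periodic_periodicExtension (g : ℝ → α) : Periodic (periodicExtension hT g) T :=
  fun t => congrArg g (toIcoMod_add_right hT 0 t)

variable {g : ℝ → α} (hg : ∀ s, 0 ≤ s → g (s + T) = g s)
include hg

theorem periodicExtension_eq_of_nonneg {t : ℝ} (ht : 0 ≤ t) : periodicExtension hT g t = g t := by
  have hdiv : 0 ≤ toIcoDiv hT 0 t := by
    rw [toIcoDiv_eq_floor, sub_zero]
    exact Int.floor_nonneg.2 (div_nonneg ht hT.le)
  have ht := toIcoMod_add_toIcoDiv_zsmul hT 0 t
  lift toIcoDiv hT 0 t to ℕ using hdiv with k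
  rw [natCast_zsmul] at ht
  conv_rhs => rw [← ht]
  exact (apply_add_nsmul_of_forall_nonneg hT.le hg (toIcoMod_mem_Ico hT 0 t).1 k).symm

theorem periodicExtension_eq_add_zsmul {t : ℝ} (m : ℤ) (h : 0 ≤ t + m • T) :
    periodicExtension hT g t = g (t + m • T) := by
  rw [← periodicExtension_eq_of_nonneg hT hg h, (periodic_periodicExtension hT g).zsmul m t]

end PeriodicExtension

theorem IsGlobalSolution.periodicExtension {f : ℝ → E → E} {g : ℝ → E} {T : ℝ} (hT : 0 < T)
    (hf : ∀ y, Periodic (f · y) T) (hg : IsGlobalSolution f g)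
    (hgT : ∀ s, 0 ≤ s → g (s + T) = g s) : IsGlobalSolution f (_root_.periodicExtension hT g) := by
  intro t₀
  obtain ⟨m, hm⟩ : ∃ m : ℤ, -t₀ < m • T := by
    obtain ⟨m, hm⟩ := exists_int_gt (-t₀ / T)
    exact ⟨m, by rwa [zsmul_eq_mul, ← div_lt_iff₀ hT]⟩
  have heq : _root_.periodicExtension hT g =ᶠ[𝓝 t₀] fun t => g (t + m • T) := by
    filter_upwards [Ioi_mem_nhds (neg_lt.1 hm)] with t ht
    exact periodicExtension_eq_add_zsmul hT hgT m (by linarith [mem_Ioi.1 ht])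
  rw [heq.eq_of_nhds]
  exact ((hg.comp_add_const fun y => (hf y).zsmul m) t₀).congr_of_eventuallyEq heq

theorem exists_nat_mul_exp_lt_one (C : ℝ) {ε T : ℝ} (hε : 0 < ε) (hT : 0 < T) :
    ∃ k : ℕ, C * Real.exp (-ε * (k * T)) < 1 := by
  have hlim : Tendsto (fun k : ℕ => C * Real.exp (-ε * (k * T))) atTop (𝓝 (C * 0)) := by
    refine (Real.tendsto_exp_atBot.comp ?_).const_mul C
    exact (tendsto_natCast_atTop_atTop.atTop_mul_const hT).const_mul_atTop_of_neg (neg_lt_zero.2 hε)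
  rw [mul_zero] at hlim
  exact (hlim.eventually (gt_mem_nhds zero_lt_one)).exists

namespace IsIncrementallyStable

variable {f : ℝ → E → E} {C ε : ℝ} (hs : IsIncrementallyStable f C ε)
include hs

theorem eq_of_eq {x y : ℝ → E} (hx : IsGlobalSolution f x) (hy : IsGlobalSolution f y)
    {s t : ℝ} (hst : s ≤ t) (h : x s = y s) : x t = y t := by
  have := hs x y hx hy s t hst
  rw [h, sub_self, norm_zero, mul_zero] at this
  exact sub_eq_zero.1 (norm_le_zero_iff.1 this)

theorem eq_of_periodic {T : ℝ} (hT : 0 < T) (hε : 0 < ε) {x y : ℝ → E}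
    (hx : IsGlobalSolution f x) (hy : IsGlobalSolution f y) (hxT : Periodic x T)
    (hyT : Periodic y T) : x = y := by
  funext t
  obtain ⟨k, hk⟩ := exists_nat_mul_exp_lt_one C hε hT
  have h := hs x y hx hy t (t + k * T) (le_add_of_nonneg_right (by positivity))
  rw [hxT.nat_mul k, hyT.nat_mul k, add_sub_cancel_left] at h
  have hd : ‖x t - y t‖ = 0 := by nlinarith [norm_nonneg (x t - y t)]
  exact sub_eq_zero.1 (norm_eq_zero.1 hd)

variable {T : ℝ} (hf : ∀ y, Periodic (f · y) T) {φ : E → ℝ → E} (hφ0 : ∀ a, φ a 0 = a)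
  (hφ : ∀ a, IsGlobalSolution f (φ a))
include hf hφ0 hφ

theorem iterate_timeMap (hT : 0 ≤ T) {x : ℝ → E} (hx : IsGlobalSolution f x) (k : ℕ) :
    (fun a => φ a T)^[k] (x 0) = x (k * T) := by
  induction k generalizing x with
  | zero => simp
  | succ k ih =>
    have hxT : φ (x 0) T = x T := hs.eq_of_eq (hφ _) hx hT (hφ0 _)
    have hx0 : x T = (fun t => x (t + T)) 0 := by simp only [zero_add]
    rw [iterate_succ_apply, hxT, hx0, ih (hx.comp_add_const hf)]
    congr 1
    push_cast
    ring

theorem exists_isFixedPt_timeMap [CompleteSpace E] (hT : 0 < T) (hε : 0 < ε) :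
    ∃ a, φ a T = a := by
  obtain ⟨k, hk⟩ := exists_nat_mul_exp_lt_one C hε hT
  have hiter : ∀ a, (fun a => φ a T)^[k] a = φ a (k * T) := fun a => by
    simpa only [hφ0] using hs.iterate_timeMap hf hφ0 hφ hT.le (hφ a) k
  have hcontr : ContractingWith (C * Real.exp (-ε * (k * T))).toNNReal (fun a => φ a T)^[k] := by
    refine ⟨Real.toNNReal_lt_one.2 hk, LipschitzWith.of_dist_le_mul fun a b => ?_⟩
    have h := hs (φ a) (φ b) (hφ a) (hφ b) 0 (k * T) (by positivity)
    rw [hφ0, hφ0, sub_zero] at h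
    rw [dist_eq_norm, dist_eq_norm, hiter, hiter]
    exact h.trans (mul_le_mul_of_nonneg_right (Real.le_coe_toNNReal _) (norm_nonneg _))
  exact ⟨_, hcontr.isFixedPt_fixedPoint_iterate⟩

end IsIncrementallyStable

theorem IsIncrementallyStable.exists_periodic_solution [CompleteSpace E] {f : ℝ → E → E}
    {C ε T : ℝ} (hs : IsIncrementallyStable f C ε) (hf : ∀ y, Periodic (f · y) T) (hT : 0 < T)
    (hε : 0 < ε) (hexist : ∀ a : E, ∃ x, x 0 = a ∧ IsGlobalSolution f x) :
    ∃ xs, IsGlobalSolution f xs ∧ Periodic xs T := by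
  choose φ hφ0 hφ using hexist
  obtain ⟨a, ha⟩ := hs.exists_isFixedPt_timeMap hf hφ0 hφ hT hε
  have hfwd : ∀ s, 0 ≤ s → φ a (s + T) = φ a s := fun s hs' =>
    hs.eq_of_eq ((hφ a).comp_add_const hf) (hφ a) hs' (by simp [ha, hφ0])
  exact ⟨periodicExtension hT (φ a), (hφ a).periodicExtension hT hf hfwd,
    periodic_periodicExtension hT _⟩

theorem entrainment_of_incrementally_stable_periodic_system_general
    (n : ℕ) (f : ℝ → EuclideanSpace ℝ (Fin n) → EuclideanSpace ℝ (Fin n))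
    (T : ℝ) (hT : 0 < T)
    (hper : ∀ (t : ℝ) (x : EuclideanSpace ℝ (Fin n)), f (t + T) x = f t x)
    (hexist : ∀ (t₀ : ℝ) (x₀ : EuclideanSpace ℝ (Fin n)),
      ∃ x : ℝ → EuclideanSpace ℝ (Fin n),
        x t₀ = x₀ ∧ ∀ t : ℝ, HasDerivAt x (f t (x t)) t)
    (C ε : ℝ) (hε : 0 < ε)
    (hcontract : ∀ x xT : ℝ → EuclideanSpace ℝ (Fin n),
      (∀ t : ℝ, HasDerivAt x (f t (x t)) t) →
      (∀ t : ℝ, HasDerivAt xT (f t (xT t)) t) →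
      ∀ s t : ℝ, s ≤ t →
        ‖x t - xT t‖ ≤ C * Real.exp (-ε * (t - s)) * ‖x s - xT s‖) :
    ∃ xs : ℝ → EuclideanSpace ℝ (Fin n),
      (∀ t : ℝ, HasDerivAt xs (f t (xs t)) t) ∧
      (∀ t : ℝ, xs (t + T) = xs t) ∧
      (∀ x : ℝ → EuclideanSpace ℝ (Fin n),
        (∀ t : ℝ, HasDerivAt x (f t (x t)) t) →
        ((∀ t : ℝ, x (t + T) = x t) → x = xs) ∧
        (∀ t : ℝ, 0 ≤ t →
          ‖x t - xs t‖ ≤ C * Real.exp (-ε * t) * ‖x 0 - xs 0‖)) := by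
  have hs : IsIncrementallyStable f C ε := hcontract
  obtain ⟨xs, hxs, hxsT⟩ :=
    hs.exists_periodic_solution (fun y t => hper t y) hT hε (hexist 0)
  refine ⟨xs, hxs, hxsT, fun x hx => ⟨fun hxT => hs.eq_of_periodic hT hε hx hxs hxT hxsT,
    fun t ht => ?_⟩⟩
  simpa only [sub_zero] using hs x xs hx hxs 0 t ht

/-- entrainment. For a continuous `T`-periodic vector field whose
flow exists globally and is incrementally exponentially stable, there is a unique
`T`-periodic global solution `x*`, and every global solution converges to it
exponentially: `‖x(t) − x*(t)‖ ≤ C e^{−εt} ‖x(0) − x*(0)‖` for `t ≥ 0`. -/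
theorem entrainment_of_incrementally_stable_periodic_system
    (n : ℕ) (f : ℝ → EuclideanSpace ℝ (Fin n) → EuclideanSpace ℝ (Fin n))
    (T : ℝ) (hT : 0 < T)
    (hcont : Continuous fun p : ℝ × EuclideanSpace ℝ (Fin n) => f p.1 p.2)
    (hper : ∀ (t : ℝ) (x : EuclideanSpace ℝ (Fin n)), f (t + T) x = f t x)
    (hexist : ∀ (t₀ : ℝ) (x₀ : EuclideanSpace ℝ (Fin n)),
      ∃ x : ℝ → EuclideanSpace ℝ (Fin n),
        x t₀ = x₀ ∧ ∀ t : ℝ, HasDerivAt x (f t (x t)) t)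
    (C ε : ℝ) (hC : 1 ≤ C) (hε : 0 < ε)
    (hcontract : ∀ x xT : ℝ → EuclideanSpace ℝ (Fin n),
      (∀ t : ℝ, HasDerivAt x (f t (x t)) t) →
      (∀ t : ℝ, HasDerivAt xT (f t (xT t)) t) →
      ∀ s t : ℝ, s ≤ t →
        ‖x t - xT t‖ ≤ C * Real.exp (-ε * (t - s)) * ‖x s - xT s‖) :
    ∃ xs : ℝ → EuclideanSpace ℝ (Fin n),
      (∀ t : ℝ, HasDerivAt xs (f t (xs t)) t) ∧
      (∀ t : ℝ, xs (t + T) = xs t) ∧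
      (∀ x : ℝ → EuclideanSpace ℝ (Fin n),
        (∀ t : ℝ, HasDerivAt x (f t (x t)) t) →
        ((∀ t : ℝ, x (t + T) = x t) → x = xs) ∧
        (∀ t : ℝ, 0 ≤ t →
          ‖x t - xs t‖ ≤ C * Real.exp (-ε * t) * ‖x 0 - xs 0‖)) :=
  entrainment_of_incrementally_stable_periodic_system_general n f T hT hper hexist C ε hε hcontract
end

section
/- Let c > 0 and let f : ℝ × ℝⁿ → ℝⁿ satisfy the one-sided Lipschitz (strong contraction) condition ⟨f(t, a) − f(t, b), a − b⟩ ≤ −c ‖a − b‖² for all t ∈ ℝ and a, b ∈ ℝⁿ. Let d, d̃ : [0,∞) → ℝⁿ be continuous, and let x, x̃ : [0,∞) → ℝⁿ be continuously differentiable with ẋ(t) = f(t, x(t)) + d(t) and ẋ̃(t) = f(t, x̃(t)) + d̃(t) for all t ≥ 0. Then for all t ≥ 0: ‖x(t) − x̃(t)‖ ≤ e^{−ct} ‖x(0) − x̃(0)‖ + (1/c) · sup_{s ∈ [0,t]} ‖d(s) − d̃(s)‖. -/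
open Set Filter Topology
open scoped RealInnerProductSpace

/-!
The norm of the discrepancy `u = x - x̃` satisfies `⟪u̇, u⟫ ≤ -c‖u‖² + M‖u‖`, with `M` the
supremum of `‖d - d̃‖`, i.e. formally `‖u‖' ≤ -c‖u‖ + M`, and Grönwall's inequality integrates
this. Since `‖u‖` need not be differentiable where `u` vanishes, one runs Grönwall on the smooth
majorant `√(‖u‖² + ε²)` instead and lets `ε → 0`.
-/

section
variable {E : Type*} [NormedAddCommGroup E] [InnerProductSpace ℝ E]

theorem HasDerivWithinAt.sqrt_norm_sq_add_sq {u : ℝ → E} {u' : E} {s : Set ℝ} {t ε : ℝ}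
    (hu : HasDerivWithinAt u u' s t) (hε : ε ≠ 0) :
    HasDerivWithinAt (fun r => √(‖u r‖ ^ 2 + ε ^ 2))
      (⟪u t, u'⟫ / √(‖u t‖ ^ 2 + ε ^ 2)) s t := by
  convert (hu.norm_sq.add_const (ε ^ 2)).sqrt (by positivity) using 1
  field_simp

theorem div_sqrt_sq_add_sq_le {K M a ε : ℝ} (hε : 0 < ε) (hM : 0 ≤ M) :
    (K * a ^ 2 + M * a) / √(a ^ 2 + ε ^ 2) ≤ K * √(a ^ 2 + ε ^ 2) + (M + |K| * ε) := by
  set h := √(a ^ 2 + ε ^ 2)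
  have hsq : h ^ 2 = a ^ 2 + ε ^ 2 := Real.sq_sqrt (by positivity)
  have ha_le : a ≤ h := Real.le_sqrt_of_sq_le (by linarith [sq_nonneg ε])
  have hε_le : ε ≤ h := Real.le_sqrt_of_sq_le (by linarith [sq_nonneg a])
  rw [div_le_iff₀ (hε.trans_le hε_le)]
  have hKh : K * h ^ 2 = K * a ^ 2 + K * ε ^ 2 := by rw [hsq]; ring
  nlinarith [mul_le_mul_of_nonneg_right (neg_abs_le K) (sq_nonneg ε),
    mul_le_mul_of_nonneg_left ha_le hM,
    mul_le_mul_of_nonneg_left hε_le (mul_nonneg (abs_nonneg K) hε.le)]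

variable {u u' : ℝ → E} {a b K M : ℝ}

theorem norm_le_gronwallBound_add_of_inner_deriv_right_le (hu : ContinuousOn u (Icc a b))
    (hu' : ∀ s ∈ Ico a b, HasDerivWithinAt u (u' s) (Ici s) s) (hM : 0 ≤ M)
    (bound : ∀ s ∈ Ico a b, ⟪u' s, u s⟫ ≤ K * ‖u s‖ ^ 2 + M * ‖u s‖)
    {ε : ℝ} (hε : 0 < ε) :
    ∀ t ∈ Icc a b, ‖u t‖ ≤ gronwallBound (‖u a‖ + ε) K (M + |K| * ε) (t - a) := by
  set h : ℝ → ℝ := fun r => √(‖u r‖ ^ 2 + ε ^ 2)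
  have h_cont : ContinuousOn h (Icc a b) := by fun_prop
  have h_deriv : ∀ s ∈ Ico a b, ∀ r, ⟪u s, u' s⟫ / h s < r →
      ∃ᶠ z in 𝓝[>] s, (z - s)⁻¹ * (h z - h s) < r := fun s hs _ hr =>
    ((hu' s hs).sqrt_norm_sq_add_sq hε.ne').liminf_right_slope_le hr
  have h_a : h a ≤ ‖u a‖ + ε := by
    rw [Real.sqrt_le_left (by positivity)]
    nlinarith [norm_nonneg (u a)]
  have h_bound : ∀ s ∈ Ico a b, ⟪u s, u' s⟫ / h s ≤ K * h s + (M + |K| * ε) := fun s hs =>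
    (div_le_div_of_nonneg_right (real_inner_comm (u s) _ ▸ bound s hs) (by positivity)).trans
      (div_sqrt_sq_add_sq_le hε hM)
  intro t ht
  calc ‖u t‖ ≤ h t := Real.le_sqrt_of_sq_le (by nlinarith)
    _ ≤ _ := le_gronwallBound_of_liminf_deriv_right_le h_cont h_deriv h_a h_bound t ht

theorem norm_le_gronwallBound_of_inner_deriv_right_le (hu : ContinuousOn u (Icc a b))
    (hu' : ∀ s ∈ Ico a b, HasDerivWithinAt u (u' s) (Ici s) s) (hM : 0 ≤ M)
    (bound : ∀ s ∈ Ico a b, ⟪u' s, u s⟫ ≤ K * ‖u s‖ ^ 2 + M * ‖u s‖) :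
    ∀ t ∈ Icc a b, ‖u t‖ ≤ gronwallBound ‖u a‖ K M (t - a) := by
  intro t ht
  have h_cont : Continuous fun ε => gronwallBound (‖u a‖ + ε) K (M + |K| * ε) (t - a) := by
    unfold gronwallBound
    split_ifs <;> fun_prop
  have h_lim : Tendsto (fun ε => gronwallBound (‖u a‖ + ε) K (M + |K| * ε) (t - a)) (𝓝[>] 0)
      (𝓝 (gronwallBound ‖u a‖ K M (t - a))) := by
    simpa using (h_cont.tendsto 0).mono_left nhdsWithin_le_nhds
  exact ge_of_tendsto h_lim (eventually_nhdsWithin_of_forall fun ε hε =>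
    norm_le_gronwallBound_add_of_inner_deriv_right_le hu hu' hM bound hε t ht)

theorem inner_sub_add_sub_le {F : E → E} {c : ℝ}
    (hF : ∀ a b, ⟪F a - F b, a - b⟫ ≤ -c * ‖a - b‖ ^ 2) (a b p q : E) :
    ⟪(F a + p) - (F b + q), a - b⟫ ≤ -c * ‖a - b‖ ^ 2 + ‖p - q‖ * ‖a - b‖ := by
  rw [add_sub_add_comm, inner_add_left]
  exact add_le_add (hF a b) (real_inner_le_norm _ _)

end

theorem gronwallBound_neg_le {δ c M t : ℝ} (hc : 0 < c) (hM : 0 ≤ M) :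
    gronwallBound δ (-c) M t ≤ Real.exp (-c * t) * δ + 1 / c * M := by
  have h_eq : gronwallBound δ (-c) M t =
      Real.exp (-c * t) * δ + 1 / c * M - M / c * Real.exp (-c * t) := by
    rw [gronwallBound_of_K_ne_0 (neg_ne_zero.2 hc.ne')]
    field_simp
    ring
  have : 0 ≤ M / c * Real.exp (-c * t) := by positivity
  linarith

/-- incremental input-to-state estimate for strongly contracting
systems. If `⟨f(t,a) − f(t,b), a − b⟩ ≤ −c‖a − b‖²` and `x, x̃` solve
`ẋ = f(t,x) + d(t)`, `ẋ̃ = f(t,x̃) + d̃(t)` on `[0,∞)` with continuous disturbances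
`d, d̃`, then `‖x(t) − x̃(t)‖ ≤ e^{−ct}‖x(0) − x̃(0)‖ + (1/c) sup_{s∈[0,t]} ‖d(s) − d̃(s)‖`. -/
theorem contraction_incremental_iss_estimate
    (n : ℕ) (c : ℝ) (hc : 0 < c)
    (f : ℝ → EuclideanSpace ℝ (Fin n) → EuclideanSpace ℝ (Fin n))
    (hf : ∀ (t : ℝ) (a b : EuclideanSpace ℝ (Fin n)),
      inner ℝ (f t a - f t b) (a - b) ≤ -c * ‖a - b‖ ^ 2)
    (d dT : ℝ → EuclideanSpace ℝ (Fin n))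
    (hd : ContinuousOn d (Ici 0)) (hdT : ContinuousOn dT (Ici 0))
    (x xT : ℝ → EuclideanSpace ℝ (Fin n))
    (hx : ∀ t ∈ Ici (0 : ℝ), HasDerivWithinAt x (f t (x t) + d t) (Ici 0) t)
    (hxT : ∀ t ∈ Ici (0 : ℝ), HasDerivWithinAt xT (f t (xT t) + dT t) (Ici 0) t) :
    ∀ t ∈ Ici (0 : ℝ),
      ‖x t - xT t‖ ≤ Real.exp (-c * t) * ‖x 0 - xT 0‖ +
        (1 / c) * sSup ((fun s => ‖d s - dT s‖) '' Icc 0 t) := by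
  intro t ht
  set M := sSup ((fun s => ‖d s - dT s‖) '' Icc 0 t)
  have hu' : ∀ s ∈ Ici (0 : ℝ), HasDerivWithinAt (fun r => x r - xT r)
      ((f s (x s) + d s) - (f s (xT s) + dT s)) (Ici 0) s := fun s hs =>
    (hx s hs).sub (hxT s hs)
  have hM : ∀ s ∈ Icc 0 t, ‖d s - dT s‖ ≤ M := fun s hs =>
    le_csSup ((isCompact_Icc.image_of_continuousOn
      ((hd.sub hdT).norm.mono Icc_subset_Ici_self)).bddAbove) (mem_image_of_mem _ hs)
  have hM₀ : 0 ≤ M := (norm_nonneg _).trans (hM 0 ⟨le_rfl, ht⟩)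
  calc ‖x t - xT t‖ ≤ gronwallBound ‖x 0 - xT 0‖ (-c) M (t - 0) :=
        norm_le_gronwallBound_of_inner_deriv_right_le
          (fun s hs => (hu' s hs.1).continuousWithinAt.mono Icc_subset_Ici_self)
          (fun s hs => (hu' s hs.1).mono (Ici_subset_Ici.2 hs.1)) hM₀
          (fun s hs => (inner_sub_add_sub_le (hf s) _ _ _ _).trans (by
            gcongr; exact hM s (Ico_subset_Icc_self hs)))
          t ⟨ht, le_rfl⟩
    _ ≤ _ := by rw [sub_zero]; exact gronwallBound_neg_le hc hM₀
end

section
/- Let c > 0, n_θ > 0, ω₀ > 0 and k_f > 0. Then there exists δ > 0 such that for all real gains k_p, k_d with |k_p| ≤ δ and |k_d| ≤ δ, the frequency-domain condition Re W̃(iω) + 1/k_f > 0 holds for all ω ∈ ℝ, where W̃(iω) = iω(k_d·iω + k_p) / ((iω + c)(ω₀² − ω² + 2 n_θ iω)). That is, the incremental-stability frequency condition can always be satisfied by choosing the control gains sufficiently small. -/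
/-!
For gains of size at most `δ` the numerator of `W̃(iω)` is at most `δ |ω| (1 + |ω|)` in modulus,
while `|iω + c| ≥ max c |ω|` and `|ω₀² - ω² + 2 n_θ iω| ≥ 2 n_θ |ω|` (its imaginary part).
Hence `|W̃(iω)| ≤ δ (1 + c⁻¹) / (2 n_θ)` uniformly in `ω`, and this is at most `1 / (2 k_f)`
once `δ` is small.
-/

open Complex

/-- `W̃(iω)`. -/
noncomputable def rollFinResponse (c n_θ ω₀ k_p k_d ω : ℝ) : ℂ :=
  I * (ω : ℂ) * ((k_d : ℂ) * (I * (ω : ℂ)) + (k_p : ℂ)) /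
    ((I * (ω : ℂ) + (c : ℂ)) * ((ω₀ : ℂ) ^ 2 - (ω : ℂ) ^ 2 + 2 * (n_θ : ℂ) * I * (ω : ℂ)))

lemma one_add_abs_le_mul_norm_I_mul_add {c : ℝ} (hc : 0 < c) (ω : ℝ) :
    1 + |ω| ≤ (1 + c⁻¹) * ‖I * ω + c‖ := by
  have hre : c ≤ ‖I * ω + c‖ := by
    simpa [abs_of_pos hc] using abs_re_le_norm (I * ω + c)
  have him : |ω| ≤ ‖I * ω + c‖ := by
    simpa using abs_im_le_norm (I * ω + c)
  have hinv : 1 ≤ c⁻¹ * ‖I * ω + c‖ := by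
    rw [inv_mul_eq_div, one_le_div hc]
    exact hre
  linarith

lemma abs_two_mul_mul_le_norm (n_θ ω₀ ω : ℝ) :
    |2 * n_θ * ω| ≤ ‖(ω₀ : ℂ) ^ 2 - (ω : ℂ) ^ 2 + 2 * (n_θ : ℂ) * I * (ω : ℂ)‖ := by
  have him : ((ω₀ : ℂ) ^ 2 - (ω : ℂ) ^ 2 + 2 * (n_θ : ℂ) * I * (ω : ℂ)).im = 2 * n_θ * ω := by
    simp [← ofReal_pow]
  rw [← him]
  exact abs_im_le_norm _

lemma norm_I_mul_mul_add_le {k_p k_d δ : ℝ} (hkp : |k_p| ≤ δ) (hkd : |k_d| ≤ δ) (ω : ℝ) :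
    ‖I * (ω : ℂ) * ((k_d : ℂ) * (I * (ω : ℂ)) + (k_p : ℂ))‖ ≤ δ * |ω| * (1 + |ω|) := by
  have hsum : ‖(k_d : ℂ) * (I * (ω : ℂ)) + (k_p : ℂ)‖ ≤ δ * (1 + |ω|) :=
    calc ‖(k_d : ℂ) * (I * (ω : ℂ)) + (k_p : ℂ)‖
        ≤ |k_d| * |ω| + |k_p| := by
          simpa using norm_add_le ((k_d : ℂ) * (I * (ω : ℂ))) (k_p : ℂ)
      _ ≤ δ * |ω| + δ := by gcongr
      _ = δ * (1 + |ω|) := by ring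
  calc ‖I * (ω : ℂ) * ((k_d : ℂ) * (I * (ω : ℂ)) + (k_p : ℂ))‖
      = |ω| * ‖(k_d : ℂ) * (I * (ω : ℂ)) + (k_p : ℂ)‖ := by simp
    _ ≤ |ω| * (δ * (1 + |ω|)) := by gcongr
    _ = δ * |ω| * (1 + |ω|) := by ring

lemma norm_rollFinResponse_le {c n_θ k_p k_d δ : ℝ} (hc : 0 < c) (hn : 0 < n_θ)
    (hkp : |k_p| ≤ δ) (hkd : |k_d| ≤ δ) (ω₀ ω : ℝ) :
    ‖rollFinResponse c n_θ ω₀ k_p k_d ω‖ ≤ δ * (1 + c⁻¹) / (2 * n_θ) := by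
  have hδ : 0 ≤ δ := (abs_nonneg _).trans hkp
  unfold rollFinResponse
  set q : ℂ := (ω₀ : ℂ) ^ 2 - (ω : ℂ) ^ 2 + 2 * (n_θ : ℂ) * I * (ω : ℂ)
  have hsecond : 2 * n_θ * |ω| ≤ ‖q‖ := by
    simpa [abs_mul, abs_of_pos hn] using abs_two_mul_mul_le_norm n_θ ω₀ ω
  rw [norm_div, norm_mul (I * (ω : ℂ) + c)]
  refine div_le_of_le_mul₀ (by positivity) (by positivity) ?_
  calc _ ≤ δ * |ω| * (1 + |ω|) := norm_I_mul_mul_add_le hkp hkd ω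
    _ ≤ δ * |ω| * ((1 + c⁻¹) * ‖I * ω + c‖) := by
      gcongr
      exact one_add_abs_le_mul_norm_I_mul_add hc ω
    _ = δ * (1 + c⁻¹) / (2 * n_θ) * (‖I * ω + c‖ * (2 * n_θ * |ω|)) := by field_simp
    _ ≤ δ * (1 + c⁻¹) / (2 * n_θ) * (‖I * ω + c‖ * ‖q‖) := by gcongr

theorem frequency_condition_holds_for_small_gains_general
    (c n_θ ω₀ k_f : ℝ) (hc : 0 < c) (hn : 0 < n_θ) (hk_f : 0 < k_f) :
    ∃ δ : ℝ, 0 < δ ∧ ∀ k_p k_d : ℝ, |k_p| ≤ δ → |k_d| ≤ δ →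
      ∀ ω : ℝ,
        (Complex.I * (ω : ℂ) * ((k_d : ℂ) * (Complex.I * (ω : ℂ)) + (k_p : ℂ)) /
            ((Complex.I * (ω : ℂ) + (c : ℂ)) *
              ((ω₀ : ℂ) ^ 2 - (ω : ℂ) ^ 2 + 2 * (n_θ : ℂ) * Complex.I * (ω : ℂ)))).re
          + 1 / k_f > 0 := by
  refine ⟨n_θ / ((1 + c⁻¹) * k_f), by positivity, fun k_p k_d hkp hkd ω => ?_⟩
  change (rollFinResponse c n_θ ω₀ k_p k_d ω).re + 1 / k_f > 0
  have hbound : ‖rollFinResponse c n_θ ω₀ k_p k_d ω‖ ≤ 1 / k_f / 2 :=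
    (norm_rollFinResponse_le hc hn hkp hkd ω₀ ω).trans_eq (by field_simp)
  have hre := (abs_re_le_norm (rollFinResponse c n_θ ω₀ k_p k_d ω)).trans hbound
  linarith [neg_abs_le (rollFinResponse c n_θ ω₀ k_p k_d ω).re, one_div_pos.2 hk_f]

/-- The frequency-domain condition `Re W̃(iω) + 1/k_f > 0`
(for all `ω ∈ ℝ`) can always be satisfied by choosing the control gains `k_p, k_d`
sufficiently small: there is `δ > 0` such that it holds whenever `|k_p| ≤ δ` and
`|k_d| ≤ δ`. -/
theorem frequency_condition_holds_for_small_gains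
    (c n_θ ω₀ k_f : ℝ) (hc : 0 < c) (hn : 0 < n_θ) (hω₀ : 0 < ω₀) (hk_f : 0 < k_f) :
    ∃ δ : ℝ, 0 < δ ∧ ∀ k_p k_d : ℝ, |k_p| ≤ δ → |k_d| ≤ δ →
      ∀ ω : ℝ,
        (Complex.I * (ω : ℂ) * ((k_d : ℂ) * (Complex.I * (ω : ℂ)) + (k_p : ℂ)) /
            ((Complex.I * (ω : ℂ) + (c : ℂ)) *
              ((ω₀ : ℂ) ^ 2 - (ω : ℂ) ^ 2 + 2 * (n_θ : ℂ) * Complex.I * (ω : ℂ)))).re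
          + 1 / k_f > 0 :=
  frequency_condition_holds_for_small_gains_general c n_θ ω₀ k_f hc hn hk_f
end

section
/- Let A be an n×n real Hurwitz matrix, B ∈ ℝⁿ a column vector, C a row covector on ℝⁿ, and k_f > 0. Assume Re( C (iωI − A)⁻¹ B ) < 1/k_f for all ω ∈ ℝ. Then for every k ∈ [0, k_f], the matrix A + k·B·C (where B·C denotes the rank-one n×n matrix given by the outer product of the column B with the row C) is Hurwitz; i.e., the frequency condition guarantees closed-loop stability for every linear gain h(y) = k y with k in the sector [0, k_f]. -/
open Matrix Filter Topology Bornology Complex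

/-!
The transfer function `G z = C (z - A)⁻¹ B` is holomorphic on the closed right half-plane
(`A` is Hurwitz) and tends to `0` at infinity. The bound `Re G < 1 / k_f` on the imaginary axis
therefore has a uniform margin there, and Phragmén–Lindelöf applied to `exp ∘ G` carries it to
the whole closed right half-plane. If `μ` with `0 ≤ Re μ` were an eigenvalue of `A + k B C`,
the matrix determinant lemma `det (μ - A - k B C) = det (μ - A) (1 - k G μ)` would give
`k G μ = 1`, so `Re G μ = 1 / k ≥ 1 / k_f`.
-/

theorem Continuous.exists_lt_forall_le_of_tendsto_cocompact {α : Type*} [TopologicalSpace α]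
    {g : α → ℝ} (hg : Continuous g) {L c : ℝ} (hL : Tendsto g (cocompact α) (𝓝 L))
    (hLc : L < c) (hgc : ∀ x, g x < c) : ∃ M < c, ∀ x, g x ≤ M := by
  rcases isEmpty_or_nonempty α with _ | ⟨⟨x₀⟩⟩
  · exact ⟨L, hLc, isEmptyElim⟩
  obtain ⟨m, hLm, hmc⟩ := exists_between hLc
  -- `max g m` is constant near infinity, so it attains its supremum
  obtain ⟨x, hx⟩ := (hg.max continuous_const).exists_forall_ge' x₀ <| by
    filter_upwards [hL.eventually_lt_const hLm] with y hy
    exact (max_eq_right hy.le).trans_le (le_max_right _ _)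
  exact ⟨max (g x) m, max_lt (hgc x) hmc, fun y => (le_max_left _ _).trans (hx y)⟩

theorem Complex.re_le_of_forall_re_le_imaginaryAxis {f : ℂ → ℂ} {M : ℝ}
    (hd : DiffContOnCl ℂ f {z | 0 < z.re})
    (hbdd : IsBoundedUnder (· ≤ ·) (cobounded ℂ) fun z => (f z).re)
    (him : ∀ ω : ℝ, (f (ω * I)).re ≤ M) {z : ℂ} (hz : 0 ≤ z.re) : (f z).re ≤ M := by
  -- `‖exp (f z)‖ = exp (f z).re`, so Phragmén–Lindelöf for `exp ∘ f` bounds `re ∘ f`.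
  obtain ⟨b, hb⟩ := hbdd
  have hexp : ∀ᶠ z in cobounded ℂ, ‖Complex.exp (f z)‖ ≤ Real.exp b := by
    filter_upwards [eventually_map.mp hb] with z hz
    simpa [Complex.norm_exp] using hz
  have := PhragmenLindelof.right_half_plane_of_bounded_on_real (f := fun z => Complex.exp (f z))
    (C := Real.exp M)
    ⟨hd.1.cexp, hd.2.cexp⟩
    ⟨1, one_lt_two, 0, .of_bound (Real.exp b) (by simpa using hexp.filter_mono inf_le_left)⟩
    ⟨Real.exp b, (RCLike.tendsto_ofReal_atTop_cobounded ℂ).eventually hexp⟩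
    (fun ω => by simpa [Complex.norm_exp] using him ω) hz
  simpa [Complex.norm_exp] using this

theorem Complex.re_lt_of_forall_re_lt_imaginaryAxis {f : ℂ → ℂ} {L : ℂ} {c : ℝ}
    (hf : DifferentiableOn ℂ f {z | 0 ≤ z.re}) (hfL : Tendsto f (cobounded ℂ) (𝓝 L))
    (hLc : L.re < c) (him : ∀ ω : ℝ, (f (ω * I)).re < c) {z : ℂ} (hz : 0 ≤ z.re) :
    (f z).re < c := by
  have hI : Tendsto (fun ω : ℝ => (ω : ℂ) * I) (cocompact ℝ) (cobounded ℂ) := by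
    rw [← Metric.cobounded_eq_cocompact, ← tendsto_norm_atTop_iff_cobounded]
    simpa using tendsto_norm_atTop_iff_cobounded.mpr (tendsto_id (α := ℝ))
  have hcont : Continuous fun ω : ℝ => (f (ω * I)).re :=
    continuous_re.comp <| hf.continuousOn.comp_continuous (by fun_prop) (by simp)
  obtain ⟨M, hMc, hM⟩ := hcont.exists_lt_forall_le_of_tendsto_cocompact
    ((continuous_re.tendsto L).comp (hfL.comp hI)) hLc him
  refine (re_le_of_forall_re_le_imaginaryAxis ?_ ?_ hM hz).trans_lt hMc
  · exact DifferentiableOn.diffContOnCl (by rwa [closure_setOfPred_lt_re])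
  · exact ((continuous_re.tendsto L).comp hfL).isBoundedUnder_le

theorem spectrum.re_apply_resolvent_lt {𝒜 : Type*} [NormedRing 𝒜] [NormedAlgebra ℂ 𝒜]
    [CompleteSpace 𝒜] {a : 𝒜} (ha : ∀ μ ∈ spectrum ℂ a, μ.re < 0) (φ : 𝒜 →L[ℂ] ℂ) {c : ℝ}
    (hc : 0 < c) (him : ∀ ω : ℝ, (φ (resolvent a (ω * I))).re < c) {z : ℂ} (hz : 0 ≤ z.re) :
    (φ (resolvent a z)).re < c := by
  refine re_lt_of_forall_re_lt_imaginaryAxis (f := fun z => φ (resolvent a z)) (L := 0)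
    (fun w hw => ?_) ?_ hc him hz
  · have hw : w ∈ resolventSet ℂ a := not_not.mp fun hσ => (ha w hσ).not_ge hw
    exact (φ.differentiableAt.comp w
      (hasDerivAt_resolvent_const_left hw).differentiableAt).differentiableWithinAt
  · simpa [Function.comp_def] using (φ.continuous.tendsto 0).comp (resolvent_tendsto_cobounded a)

theorem Matrix.resolvent_eq_inv {n K : Type*} [Fintype n] [DecidableEq n] [CommRing K]
    (M : Matrix n n K) (z : K) : resolvent M z = (z • 1 - M)⁻¹ := by
  rw [resolvent, nonsing_inv_eq_ringInverse, Algebra.algebraMap_eq_smul_one]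

theorem Matrix.det_sub_vecMulVec {n K : Type*} [Fintype n] [DecidableEq n] [CommRing K]
    {N : Matrix n n K} (hN : IsUnit N.det) (u v : n → K) :
    (N - vecMulVec u v).det = N.det * (1 - v ⬝ᵥ (N⁻¹ *ᵥ u)) := by
  rw [sub_eq_add_neg, ← neg_vecMulVec, vecMulVec_eq Unit, det_add_replicateCol_mul_replicateRow hN]
  rw [det_unique (1 + _), add_apply, Matrix.mul_assoc, ← replicateCol_mulVec,
    replicateRow_mul_replicateCol_apply, mulVec_neg, dotProduct_neg, one_apply_eq, ← sub_eq_add_neg]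

theorem Matrix.dotProduct_resolvent_mulVec_eq_one {n K : Type*} [Fintype n] [DecidableEq n]
    [Field K] {M : Matrix n n K} {u v : n → K} {μ : K} (hμ : μ ∉ spectrum K M)
    (h : μ ∈ spectrum K (M + vecMulVec u v)) : v ⬝ᵥ (resolvent M μ *ᵥ u) = 1 := by
  rw [spectrum.notMem_iff, isUnit_iff_isUnit_det, isUnit_iff_ne_zero] at hμ
  rw [spectrum.mem_iff, isUnit_iff_isUnit_det, isUnit_iff_ne_zero, not_not, ← sub_sub,
    det_sub_vecMulVec (isUnit_iff_ne_zero.mpr hμ), mul_eq_zero, sub_eq_zero] at h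
  rw [resolvent, ← nonsing_inv_eq_ringInverse]
  exact (h.resolve_left hμ).symm

theorem Matrix.re_dotProduct_resolvent_mulVec_lt {n : Type*} [Fintype n] [DecidableEq n]
    {A : Matrix n n ℂ} (hA : ∀ μ ∈ spectrum ℂ A, μ.re < 0) (b c : n → ℂ) {r : ℝ} (hr : 0 < r)
    (him : ∀ ω : ℝ, (c ⬝ᵥ (resolvent A (ω * I) *ᵥ b)).re < r) {z : ℂ} (hz : 0 ≤ z.re) :
    (c ⬝ᵥ (resolvent A z *ᵥ b)).re < r := by
  let := Matrix.linftyOpNormedRing (n := n) (α := ℂ)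
  let := Matrix.linftyOpNormedAlgebra (n := n) (R := ℂ) (α := ℂ)
  let φ : Matrix n n ℂ →ₗ[ℂ] ℂ :=
    { toFun M := c ⬝ᵥ (M *ᵥ b)
      map_add' M N := by rw [add_mulVec, dotProduct_add]
      map_smul' z M := by rw [smul_mulVec, dotProduct_smul, RingHom.id_apply] }
  exact spectrum.re_apply_resolvent_lt hA (LinearMap.toContinuousLinearMap φ) hr him hz

/-- Under the Hurwitz and frequency-domain assumptions of the
circle criterion, for every linear gain `k ∈ [0, k_f]` the closed-loop matrix
`A + k B C` (with `B C` the outer product of the column `B` and the row `C`) is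
Hurwitz. -/
theorem frequency_condition_implies_linear_sector_stability
    (n : ℕ) (A : Matrix (Fin n) (Fin n) ℝ) (B C : Fin n → ℝ) (k_f : ℝ)
    (hk_f : 0 < k_f)
    (hHurwitz : ∀ μ ∈ spectrum ℂ (A.map (fun a : ℝ => (a : ℂ))), μ.re < 0)
    (hfreq : ∀ ω : ℝ,
      ((fun i => (C i : ℂ)) ⬝ᵥ
        (((Complex.I * (ω : ℂ)) • (1 : Matrix (Fin n) (Fin n) ℂ)
            - A.map (fun a : ℝ => (a : ℂ)))⁻¹ *ᵥ fun i => (B i : ℂ))).re < 1 / k_f) :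
    ∀ k ∈ Set.Icc (0 : ℝ) k_f,
      ∀ μ ∈ spectrum ℂ ((A + k • vecMulVec B C).map (fun a : ℝ => (a : ℂ))),
        μ.re < 0 := by
  rintro k ⟨hk0, hkk_f⟩ μ hμ
  by_contra! hμre
  set A' := A.map fun a : ℝ => (a : ℂ)
  set b : Fin n → ℂ := fun i => (B i : ℂ)
  set c : Fin n → ℂ := fun i => (C i : ℂ)
  set G := c ⬝ᵥ (resolvent A' μ *ᵥ b)
  have hclosed : (A + k • vecMulVec B C).map (fun a : ℝ => (a : ℂ)) =
      A' + vecMulVec ((k : ℂ) • b) c := by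
    ext i j
    simp [A', b, c, vecMulVec_apply]
  have hkG : k * G.re = 1 := by
    have h := dotProduct_resolvent_mulVec_eq_one (fun h => (hHurwitz μ h).not_ge hμre)
      (hclosed ▸ hμ)
    rw [mulVec_smul, dotProduct_smul, smul_eq_mul] at h
    simpa using congr_arg re h
  have hG : G.re < 1 / k_f :=
    re_dotProduct_resolvent_mulVec_lt hHurwitz b c (one_div_pos.mpr hk_f)
      (fun ω => by simpa [resolvent_eq_inv, mul_comm] using hfreq ω) hμre
  have hGpos : 0 < G.re := pos_of_mul_pos_right (hkG ▸ one_pos) hk0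
  rw [lt_div_iff₀ hk_f] at hG
  linarith [mul_le_mul_of_nonneg_right hkk_f hGpos.le]
end
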